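/- arXiv:1602.08618 — 4 statements merged into one kernel-verified Lean document; each statement's English description precedes it below -/
import Mathlib

section
/- Let H be a Hilbert space, D : U → Y a bounded linear map between Hilbert spaces, and J = J* ∈ B(Y) self-adjoint. If the operator D*JD ∈ B(U) (defined by ⟨v, D*JDu⟩ = ⟨Dv, JDu⟩) is boundedly invertible, then D is bounded below (there exists ε > 0 with ‖Du‖ ≥ ε‖u‖ for all u ∈ U), the range of D is closed, and the compression PJP* of J to the closure of the range of D (where P is the orthogonal projection onto Range(D)) is boundedly invertible. -/
/-!
A left inverse `S'` of `D*JD` makes `S' D* J` a bounded left inverse of `D`, so `D` is bounded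
below and has closed range `K`; hence `D = ι E` for the inclusion `ι : K → Y` and an isomorphism
`E : U ≃ K`. Since `ι* = P`, the compression `T = P J ι` satisfies `E* T E = D*JD`, and as `E` and
`E*` are isomorphisms, `E S' E*` is a two-sided inverse of `T`.
-/

open ContinuousLinearMap

theorem AntilipschitzWith.exists_pos_mul_norm_le {𝕜 E F : Type*} [NontriviallyNormedField 𝕜]
    [SeminormedAddCommGroup E] [NormedSpace 𝕜 E] [SeminormedAddCommGroup F] [NormedSpace 𝕜 F]
    {f : E →L[𝕜] F} {K : NNReal} (hf : AntilipschitzWith K f) :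
    ∃ ε : ℝ, 0 < ε ∧ ∀ x, ε * ‖x‖ ≤ ‖f x‖ := by
  refine ⟨((K : ℝ) + 1)⁻¹, by positivity, fun x => ?_⟩
  rw [inv_mul_le_iff₀ (by positivity)]
  exact (f.bound_of_antilipschitz hf x).trans (by gcongr; linarith)

theorem ContinuousLinearMap.comp_eq_id_of_comp_comp_eq_id {R M N : Type*} [Semiring R]
    [TopologicalSpace M] [AddCommMonoid M] [Module R M]
    [TopologicalSpace N] [AddCommMonoid N] [Module R N]
    {T : N →L[R] N} {A : N →L[R] M} {B : M →L[R] N} {S : M →L[R] M}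
    (hA : Function.Injective A) (hB : Function.Surjective B)
    (hS₁ : (A ∘L T ∘L B) ∘L S = .id R M) (hS₂ : S ∘L (A ∘L T ∘L B) = .id R M) :
    T ∘L (B ∘L S ∘L A) = .id R N ∧ (B ∘L S ∘L A) ∘L T = .id R N := by
  constructor
  · ext x
    exact hA (DFunLike.congr_fun hS₁ (A x))
  · ext x
    obtain ⟨u, rfl⟩ := hB x
    exact congrArg B (DFunLike.congr_fun hS₂ u)

section InnerProductSpace

variable {𝕜 U Y : Type*} [RCLike 𝕜]
  [NormedAddCommGroup U] [InnerProductSpace 𝕜 U] [CompleteSpace U]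
  [NormedAddCommGroup Y] [InnerProductSpace 𝕜 Y] [CompleteSpace Y]

theorem Submodule.adjoint_comp_compression_comp (K : Submodule 𝕜 Y) [CompleteSpace K]
    (J : Y →L[𝕜] Y) (E : U →L[𝕜] K) :
    adjoint E ∘L (K.orthogonalProjectionOnto ∘L J ∘L K.subtypeL) ∘L E
      = adjoint (K.subtypeL ∘L E) ∘L J ∘L (K.subtypeL ∘L E) := by
  rw [adjoint_comp, K.adjoint_subtypeL]
  rfl

theorem ContinuousLinearEquiv.injective_adjoint {V : Type*} [NormedAddCommGroup V]
    [InnerProductSpace 𝕜 V] [CompleteSpace V] (E : U ≃L[𝕜] V) :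
    Function.Injective (adjoint (E : U →L[𝕜] V)) := by
  refine Function.LeftInverse.injective (g := adjoint (E.symm : V →L[𝕜] U)) fun x => ?_
  rw [← comp_apply, ← adjoint_comp, ContinuousLinearEquiv.coe_comp_coe_symm, adjoint_id, id_apply]

end InnerProductSpace

theorem stmt5_general {U Y : Type*}
    [NormedAddCommGroup U] [InnerProductSpace ℂ U] [CompleteSpace U]
    [NormedAddCommGroup Y] [InnerProductSpace ℂ Y] [CompleteSpace Y]
    (D : U →L[ℂ] Y) (J : Y →L[ℂ] Y)
    (S' : U →L[ℂ] U)
    (hS1 : ((ContinuousLinearMap.adjoint D).comp (J.comp D)).comp S'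
      = ContinuousLinearMap.id ℂ U)
    (hS2 : S'.comp ((ContinuousLinearMap.adjoint D).comp (J.comp D))
      = ContinuousLinearMap.id ℂ U)
    (K : Submodule ℂ Y)
    (hK : K = (LinearMap.range (D : U →ₗ[ℂ] Y)).topologicalClosure) :
    (∃ ε : ℝ, 0 < ε ∧ ∀ u : U, ε * ‖u‖ ≤ ‖D u‖) ∧
    IsClosed (Set.range D) ∧
    ∃ T T' : K →L[ℂ] K,
      (∀ x y : K, (inner ℂ (y : Y) (J (x : Y) - ((T x : K) : Y)) : ℂ) = 0) ∧
      T.comp T' = ContinuousLinearMap.id ℂ K ∧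
      T'.comp T = ContinuousLinearMap.id ℂ K := by
  have hanti : AntilipschitzWith ‖S' ∘L adjoint D ∘L J‖₊ D :=
    (S' ∘L adjoint D ∘L J).lipschitz.to_rightInverse (DFunLike.congr_fun hS2)
  have hclosed : IsClosed (Set.range D) := hanti.isClosed_range D.uniformContinuous
  have hKrange : K = D.range := hK.trans (IsClosed.submodule_topologicalClosure_eq hclosed)
  subst hKrange
  have : CompleteSpace D.range := hclosed.completeSpace_coe
  let E := D.equivRange hanti.injective hclosed
  have hD : D.range.subtypeL ∘L (E : U →L[ℂ] D.range) = D := rfl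
  refine ⟨hanti.exists_pos_mul_norm_le, hclosed,
    D.range.orthogonalProjectionOnto ∘L J ∘L D.range.subtypeL, E ∘L S' ∘L adjoint (E : U →L[ℂ] _),
    fun x y => Submodule.sub_starProjection_mem_orthogonal (J x) y y.2, ?_⟩
  have hconj := D.range.adjoint_comp_compression_comp J (E : U →L[ℂ] D.range)
  rw [hD] at hconj
  exact comp_eq_id_of_comp_comp_eq_id E.injective_adjoint E.surjective
    (hconj ▸ hS1) (hconj ▸ hS2)

/-- from Lemma 11.1: if `D*JD` is boundedly invertible
(`J` self-adjoint), then `D` is bounded below, its range is closed, and the compression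
`PJP*` of `J` to the closure `K` of the range of `D` is boundedly invertible.  The
compression is characterized as the operator `T : K → K` with `Jx − Tx ⟂ K` for `x ∈ K`. -/
theorem stmt5 {U Y : Type*}
    [NormedAddCommGroup U] [InnerProductSpace ℂ U] [CompleteSpace U]
    [NormedAddCommGroup Y] [InnerProductSpace ℂ Y] [CompleteSpace Y]
    (D : U →L[ℂ] Y) (J : Y →L[ℂ] Y) (hJ : IsSelfAdjoint J)
    (S' : U →L[ℂ] U)
    (hS1 : ((ContinuousLinearMap.adjoint D).comp (J.comp D)).comp S'
      = ContinuousLinearMap.id ℂ U)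
    (hS2 : S'.comp ((ContinuousLinearMap.adjoint D).comp (J.comp D))
      = ContinuousLinearMap.id ℂ U)
    (K : Submodule ℂ Y)
    (hK : K = (LinearMap.range (D : U →ₗ[ℂ] Y)).topologicalClosure) :
    (∃ ε : ℝ, 0 < ε ∧ ∀ u : U, ε * ‖u‖ ≤ ‖D u‖) ∧
    IsClosed (Set.range D) ∧
    ∃ T T' : K →L[ℂ] K,
      (∀ x y : K, (inner ℂ (y : Y) (J (x : Y) - ((T x : K) : Y)) : ℂ) = 0) ∧
      T.comp T' = ContinuousLinearMap.id ℂ K ∧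
      T'.comp T = ContinuousLinearMap.id ℂ K :=
  stmt5_general D J S' hS1 hS2 K hK
end

section
/- Let N̂, M̂ ∈ H^∞(ℂ⁺; ℂ) be quasi-right coprime scalar functions and suppose M̂^{-1} is bounded on some right half-plane ℂ_ω⁺. Suppose further that N̂ and M̂ extend continuously to the closed right half-plane including infinity, that inf_{s ∈ i ℝ}(|N̂(s)|² + |M̂(s)|²) > 0, and that |N̂(s)| + |M̂(s)| > 0 for every s ∈ ℂ⁺. Then inf_{s ∈ closure(ℂ⁺)}(|N̂(s)|² + |M̂(s)|²) > 0, and hence by the Corona theorem N̂, M̂ are right coprime: there exist X̃, Ỹ ∈ H^∞(ℂ⁺; ℂ) with X̃M̂ − ỸN̂ = 1. -/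
open MeasureTheory Filter Topology

/-- Membership in the Hardy space `H²(ℂ⁺)` (scalar or vector-valued). -/
def MemH2 {X : Type*} [NormedAddCommGroup X] [NormedSpace ℂ X] (F : ℂ → X) : Prop :=
  DifferentiableOn ℂ F {s : ℂ | 0 < s.re} ∧
    ∃ C : ℝ, ∀ r : ℝ, 0 < r →
      (∫ t : ℝ, ‖F ((r : ℂ) + (t : ℂ) * Complex.I)‖ ^ 2) ≤ C

/-!
The Cayley transform `z ↦ (1 + z) / (1 - z)` maps the closed unit disk minus `1` onto the closed
right half-plane, with `1` corresponding to `∞`. Under it, the continuous extensions of `N̂, M̂`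
become elements of the disk algebra (continuous on the closed disk, holomorphic inside), and
`‖N̂‖² + ‖M̂‖²`, positive on the compact closed disk, is bounded below. For the disk algebra the
corona theorem is elementary: polynomials are dense (dilate, then truncate the Taylor series), so
every character is evaluation at a point of the closed disk, and a pair without common zeros lies
in no maximal ideal.
-/

open Metric

noncomputable section

local notation "𝔻" => closedBall (0 : ℂ) 1

def cayley (z : ℂ) : ℂ := (1 + z) / (1 - z)

def cayleyInv (s : ℂ) : ℂ := (s - 1) / (s + 1)

lemma re_cayley (z : ℂ) : (cayley z).re = (1 - Complex.normSq z) / Complex.normSq (1 - z) := by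
  simp [cayley, Complex.div_re, Complex.normSq_apply]
  ring

lemma re_cayley_nonneg {z : ℂ} (hz : z ∈ 𝔻) : 0 ≤ (cayley z).re := by
  rw [mem_closedBall_zero_iff] at hz
  rw [re_cayley, Complex.normSq_eq_norm_sq]
  exact div_nonneg (by nlinarith [norm_nonneg z]) (Complex.normSq_nonneg _)

lemma re_cayley_pos {z : ℂ} (hz : z ∈ ball (0 : ℂ) 1) : 0 < (cayley z).re := by
  rw [mem_ball_zero_iff] at hz
  have hz1 : 1 - z ≠ 0 := sub_ne_zero.2 (by rintro rfl; simp at hz)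
  rw [re_cayley, Complex.normSq_eq_norm_sq]
  exact div_pos (by nlinarith [norm_nonneg z]) (Complex.normSq_pos.2 hz1)

lemma tendsto_norm_cayley : Tendsto (fun z => ‖cayley z‖) (𝓝[≠] 1) atTop := by
  have hnum : Tendsto (fun z : ℂ => ‖1 + z‖) (𝓝[≠] 1) (𝓝 2) := by
    have h : Tendsto (fun z : ℂ => ‖1 + z‖) (𝓝 1) (𝓝 ‖(1 : ℂ) + 1‖) :=
      (continuous_const.add continuous_id).norm.tendsto 1
    norm_num at h
    exact h.mono_left nhdsWithin_le_nhds
  have hden := (tendsto_norm_sub_self_nhdsNE (1 : ℂ)).inv_tendsto_nhdsGT_zero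
  refine (Tendsto.pos_mul_atTop two_pos hnum hden).congr fun z => ?_
  simp only [Pi.inv_apply, cayley, div_eq_mul_inv, norm_mul, norm_inv]
  rw [norm_sub_rev]

lemma differentiableAt_cayley {z : ℂ} (hz : z ≠ 1) : DifferentiableAt ℂ cayley z :=
  (differentiableAt_const _ |>.add differentiableAt_id).div
    (differentiableAt_const _ |>.sub differentiableAt_id) (sub_ne_zero.2 hz.symm)

lemma add_one_ne_zero_of_re_nonneg {s : ℂ} (hs : 0 ≤ s.re) : s + 1 ≠ 0 := fun h => by
  have := congrArg Complex.re h
  simp at this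
  linarith

lemma norm_sub_one_le_norm_add_one {s : ℂ} (hs : 0 ≤ s.re) : ‖s - 1‖ ≤ ‖s + 1‖ := by
  rw [Complex.norm_def, Complex.norm_def]
  gcongr
  simp [Complex.normSq_apply]
  nlinarith

lemma norm_sub_one_lt_norm_add_one {s : ℂ} (hs : 0 < s.re) : ‖s - 1‖ < ‖s + 1‖ := by
  rw [Complex.norm_def, Complex.norm_def]
  apply Real.sqrt_lt_sqrt (Complex.normSq_nonneg _)
  simp [Complex.normSq_apply]
  nlinarith

lemma cayleyInv_mem_closedBall {s : ℂ} (hs : 0 ≤ s.re) : cayleyInv s ∈ 𝔻 := by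
  rw [mem_closedBall_zero_iff, cayleyInv, norm_div,
    div_le_one (norm_pos_iff.2 (add_one_ne_zero_of_re_nonneg hs))]
  exact norm_sub_one_le_norm_add_one hs

lemma cayleyInv_mem_ball {s : ℂ} (hs : 0 < s.re) : cayleyInv s ∈ ball (0 : ℂ) 1 := by
  rw [mem_ball_zero_iff, cayleyInv, norm_div,
    div_lt_one (norm_pos_iff.2 (add_one_ne_zero_of_re_nonneg hs.le))]
  exact norm_sub_one_lt_norm_add_one hs

lemma cayleyInv_ne_one {s : ℂ} (hs : s + 1 ≠ 0) : cayleyInv s ≠ 1 := by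
  rw [cayleyInv, Ne, div_eq_one_iff_eq hs]
  intro h
  have := congrArg (· - s) h
  norm_num at this

lemma cayley_cayleyInv {s : ℂ} (hs : s + 1 ≠ 0) : cayley (cayleyInv s) = s := by
  have h2 : (2 : ℂ) ≠ 0 := two_ne_zero
  rw [cayley, cayleyInv, one_add_div hs, one_sub_div hs]
  field_simp
  ring

lemma differentiableOn_cayleyInv : DifferentiableOn ℂ cayleyInv {s : ℂ | 0 < s.re} :=
  fun s hs => DifferentiableWithinAt.div (by fun_prop) (by fun_prop)
    (add_one_ne_zero_of_re_nonneg hs.le)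

section Pullback

variable {X : Type*}

def cayleyPullback (H : ℂ → X) (Hinf : X) (z : ℂ) : X :=
  if z = 1 then Hinf else H (cayley z)

lemma cayleyPullback_cayleyInv (H : ℂ → X) (Hinf : X) {s : ℂ} (hs : s + 1 ≠ 0) :
    cayleyPullback H Hinf (cayleyInv s) = H s := by
  rw [cayleyPullback, if_neg (cayleyInv_ne_one hs), cayley_cayleyInv hs]

lemma continuousOn_cayleyPullback [TopologicalSpace X] {H : ℂ → X} {Hinf : X}
    (hH : ContinuousOn H {s : ℂ | 0 ≤ s.re})
    (hlim : Tendsto H (comap (fun z : ℂ => ‖z‖) atTop ⊓ 𝓟 {s : ℂ | 0 ≤ s.re}) (𝓝 Hinf)) :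
    ContinuousOn (cayleyPullback H Hinf) 𝔻 := by
  intro z hz
  by_cases hz1 : z = 1
  · subst hz1
    rw [← continuousWithinAt_sdiff_self, ContinuousWithinAt, cayleyPullback, if_pos rfl]
    have hcayley : Tendsto cayley (𝓝[𝔻 \ {1}] 1)
        (comap (fun z : ℂ => ‖z‖) atTop ⊓ 𝓟 {s : ℂ | 0 ≤ s.re}) :=
      tendsto_inf.2 ⟨tendsto_comap_iff.2 (tendsto_norm_cayley.mono_left
        (nhdsWithin_mono _ (Set.sdiff_subset_compl _ _))),
        tendsto_principal.2 (eventually_nhdsWithin_of_forall fun w hw => re_cayley_nonneg hw.1)⟩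
    exact (hlim.comp hcayley).congr'
      (eventually_nhdsWithin_of_forall fun w hw => (if_neg hw.2).symm)
  · have hcomp : ContinuousWithinAt (H ∘ cayley) 𝔻 z :=
      (hH _ (re_cayley_nonneg hz)).comp
        (differentiableAt_cayley hz1).continuousAt.continuousWithinAt
        fun w hw => re_cayley_nonneg hw
    refine hcomp.congr_of_eventuallyEq ?_ (if_neg hz1)
    filter_upwards [nhdsWithin_le_nhds (isOpen_ne.mem_nhds hz1)] with w hw using if_neg hw

lemma differentiableOn_cayleyPullback {H : ℂ → ℂ} (Hinf : ℂ)
    (hH : DifferentiableOn ℂ H {s : ℂ | 0 < s.re}) :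
    DifferentiableOn ℂ (cayleyPullback H Hinf) (ball 0 1) := by
  refine (hH.comp (fun z hz => (differentiableAt_cayley ?_).differentiableWithinAt)
    fun z hz => re_cayley_pos hz).congr fun z hz => if_neg ?_
  all_goals rintro rfl; simp at hz

end Pullback

lemma exists_pos_le_of_re_nonneg {H : ℂ → ℝ} {L : ℝ} (hH : ContinuousOn H {s : ℂ | 0 ≤ s.re})
    (hlim : Tendsto H (comap (fun z : ℂ => ‖z‖) atTop ⊓ 𝓟 {s : ℂ | 0 ≤ s.re}) (𝓝 L))
    (hL : 0 < L) (hpos : ∀ s : ℂ, 0 ≤ s.re → 0 < H s) :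
    ∃ ε : ℝ, 0 < ε ∧ ∀ s : ℂ, 0 ≤ s.re → ε ≤ H s := by
  obtain ⟨ε, hε, hle⟩ := (isCompact_closedBall _ _).exists_forall_le'
    (continuousOn_cayleyPullback hH hlim) (a := 0) fun z hz => by
      unfold cayleyPullback
      split_ifs
      exacts [hL, hpos _ (re_cayley_nonneg hz)]
  refine ⟨ε, hε, fun s hs => ?_⟩
  simpa [cayleyPullback_cayleyInv H L (add_one_ne_zero_of_re_nonneg hs)]
    using hle _ (cayleyInv_mem_closedBall hs)

open Polynomial in
lemma exists_polynomial_near_of_differentiableOn {g : ℂ → ℂ} {R : ℝ} (hR : 1 < R)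
    (hg : DifferentiableOn ℂ g (closedBall 0 R)) {ε : ℝ} (hε : 0 < ε) :
    ∃ p : ℂ[X], ∀ z ∈ 𝔻, ‖g z - p.eval z‖ < ε := by
  lift R to NNReal using zero_le_one.trans hR.le
  have hps := hg.hasFPowerSeriesOnBall (zero_lt_one.trans hR)
  have hunif := (tendstoLocallyUniformlyOn_iff_forall_isCompact isOpen_eball).1
    hps.tendstoLocallyUniformlyOn _
    (by rw [eball_coe]; exact closedBall_subset_ball hR) (isCompact_closedBall 0 1)
  obtain ⟨n, hn⟩ := (Metric.tendstoUniformlyOn_iff.1 hunif ε hε).exists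
  refine ⟨∑ k ∈ Finset.range n, C ((cauchyPowerSeries g 0 R).coeff k) * X ^ k, fun z hz => ?_⟩
  have hsum : (cauchyPowerSeries g 0 R).partialSum n z =
      (∑ k ∈ Finset.range n, C ((cauchyPowerSeries g 0 R).coeff k) * X ^ k).eval z := by
    simp only [FormalMultilinearSeries.partialSum, FormalMultilinearSeries.apply_eq_pow_smul_coeff,
      eval_finsetSum, eval_mul, eval_C, eval_pow, eval_X, smul_eq_mul, mul_comm]
  simpa [hsum, dist_eq_norm] using hn z hz


lemma norm_sub_div_one_add_lt {z : ℂ} (hz : ‖z‖ ≤ 1) {d : ℝ} (hd : 0 < d) :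
    ‖z - z / (1 + d : ℝ)‖ < d := by
  have hd1 : ((1 + d : ℝ) : ℂ) ≠ 0 := by exact_mod_cast (by positivity : (0 : ℝ) < 1 + d).ne'
  rw [show z - z / (1 + d : ℝ) = z * ((d / (1 + d) : ℝ) : ℂ) by
      push_cast at hd1 ⊢; field_simp; ring,
    norm_mul, Complex.norm_real, Real.norm_of_nonneg (by positivity)]
  calc ‖z‖ * (d / (1 + d)) ≤ d / (1 + d) := mul_le_of_le_one_left (by positivity) hz
    _ < d := div_lt_self hd (by linarith)

def extendByZero (f : C(𝔻, ℂ)) : ℂ → ℂ := Function.extend Subtype.val f 0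

lemma extendByZero_apply (f : C(𝔻, ℂ)) (z : 𝔻) : extendByZero f z = f z :=
  Subtype.val_injective.extend_apply _ _ _

lemma extendByZero_apply_of_mem_ball (f : C(𝔻, ℂ)) {z : ℂ} (hz : z ∈ ball (0 : ℂ) 1) :
    extendByZero f z = f ⟨z, ball_subset_closedBall hz⟩ :=
  extendByZero_apply f ⟨z, _⟩

def diskAlgebra : Subalgebra ℂ C(𝔻, ℂ) where
  carrier := {f | DifferentiableOn ℂ (extendByZero f) (ball 0 1)}
  mul_mem' {f g} hf hg := (hf.mul hg).congr fun z hz => by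
    simp [extendByZero_apply_of_mem_ball _ hz]
  add_mem' {f g} hf hg := (hf.add hg).congr fun z hz => by
    simp [extendByZero_apply_of_mem_ball _ hz]
  algebraMap_mem' r := (differentiableOn_const r).congr fun z hz => by
    simp [extendByZero_apply_of_mem_ball _ hz]

namespace diskAlgebra

lemma differentiableOn_extendByZero (f : diskAlgebra) :
    DifferentiableOn ℂ (extendByZero f) (ball 0 1) := f.2

def mk (g : ℂ → ℂ) (hc : ContinuousOn g 𝔻) (hd : DifferentiableOn ℂ g (ball 0 1)) :
    diskAlgebra :=
  ⟨⟨Set.domRestrict 𝔻 g, hc.domRestrict⟩, hd.congr fun _ hz => extendByZero_apply_of_mem_ball _ hz⟩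

lemma isClosed : IsClosed (diskAlgebra : Set C(𝔻, ℂ)) := by
  refine IsSeqClosed.isClosed fun f p hf hfp => ?_
  refine TendstoLocallyUniformlyOn.differentiableOn (φ := atTop) ?_ (Eventually.of_forall hf)
    isOpen_ball
  refine (Metric.tendstoUniformlyOn_iff.2 fun ε hε => ?_).tendstoLocallyUniformlyOn
  filter_upwards [(tendsto_iff_dist_tendsto_zero.1 hfp).eventually (eventually_lt_nhds hε)]
    with n hn z hz
  rw [extendByZero_apply_of_mem_ball _ hz, extendByZero_apply_of_mem_ball _ hz, dist_comm]
  exact (ContinuousMap.dist_apply_le_dist _).trans_lt hn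

instance : CompleteSpace diskAlgebra := isClosed.completeSpace_coe

instance : NormOneClass diskAlgebra :=
  ⟨show ‖((1 : diskAlgebra) : C(𝔻, ℂ))‖ = 1 from norm_one⟩

def coordinate : diskAlgebra := mk id continuousOn_id differentiableOn_id

lemma norm_coordinate_le : ‖coordinate‖ ≤ 1 :=
  show ‖(coordinate : C(𝔻, ℂ))‖ ≤ 1 from
    (ContinuousMap.norm_le _ zero_le_one).2 fun z => mem_closedBall_zero_iff.1 z.2

open Polynomial in
lemma exists_polynomial_near (f : diskAlgebra) {ε : ℝ} (hε : 0 < ε) :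
    ∃ p : ℂ[X], ∀ z : 𝔻, ‖(f : C(𝔻, ℂ)) z - p.eval (z : ℂ)‖ < ε := by
  obtain ⟨d, hd, hfd⟩ := Metric.uniformContinuous_iff.1
    (CompactSpace.uniformContinuous_of_continuous (f : C(𝔻, ℂ)).continuous) (ε / 2) (half_pos hε)
  have hd1 : 0 < 1 + d := by positivity
  have hshrink : ∀ z : ℂ, ‖z‖ ≤ 1 + d / 2 → z / (1 + d : ℝ) ∈ ball (0 : ℂ) 1 := fun z hz => by
    rw [mem_ball_zero_iff, norm_div, Complex.norm_real, Real.norm_of_nonneg hd1.le,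
      div_lt_one hd1]
    linarith
  obtain ⟨p, hp⟩ := exists_polynomial_near_of_differentiableOn (R := 1 + d / 2) (by linarith)
    ((differentiableOn_extendByZero f).comp (by fun_prop)
      fun z hz => hshrink z (mem_closedBall_zero_iff.1 hz))
    (half_pos hε)
  refine ⟨p, fun z => ?_⟩
  have hz : ‖(z : ℂ)‖ ≤ 1 := mem_closedBall_zero_iff.1 z.2
  have hzd := hshrink z (by linarith)
  have hnear : ‖(f : C(𝔻, ℂ)) z - extendByZero f (z / (1 + d : ℝ))‖ < ε / 2 := by
    rw [extendByZero_apply_of_mem_ball _ hzd, ← dist_eq_norm]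
    exact hfd (by rw [Subtype.dist_eq, dist_eq_norm]; exact norm_sub_div_one_add_lt hz hd)
  calc _ ≤ _ := norm_sub_le_norm_sub_add_norm_sub _ (extendByZero f (z / (1 + d : ℝ))) _
    _ < ε / 2 + ε / 2 := add_lt_add hnear (hp z z.2)
    _ = ε := add_halves ε

open Polynomial in
lemma dense_adjoin_coordinate : Dense (Algebra.adjoin ℂ {coordinate} : Set diskAlgebra) := by
  refine Metric.dense_iff.2 fun f ε hε => ?_
  obtain ⟨p, hp⟩ := exists_polynomial_near f (half_pos hε)
  refine ⟨aeval coordinate p, ?_, aeval_mem_adjoin_singleton ℂ _⟩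
  rw [mem_ball, dist_comm, Subtype.dist_eq]
  refine ((ContinuousMap.dist_le (half_pos hε).le).2 fun z => ?_).trans_lt (half_lt_self hε)
  rw [aeval_subalgebra_coe, aeval_continuousMap_apply, dist_eq_norm]
  exact (hp z).le

open WeakDual

lemma character_coordinate_mem (χ : characterSpace ℂ diskAlgebra) : χ coordinate ∈ 𝔻 :=
  mem_closedBall_zero_iff.2 <|
    (spectrum.norm_le_norm_of_mem (CharacterSpace.apply_mem_spectrum χ coordinate)).trans
      norm_coordinate_le

lemma character_apply (χ : characterSpace ℂ diskAlgebra) (f : diskAlgebra) :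
    χ f = (f : C(𝔻, ℂ)) ⟨χ coordinate, character_coordinate_mem χ⟩ := by
  let eval : diskAlgebra →ₐ[ℂ] ℂ :=
    (ContinuousMap.evalAlgHom ℂ ℂ ⟨χ coordinate, character_coordinate_mem χ⟩).comp
      diskAlgebra.val
  have heq := Continuous.ext_on dense_adjoin_coordinate
    (f := CharacterSpace.toAlgHom χ) (g := eval)
    (map_continuous (χ : WeakDual ℂ diskAlgebra))
    ((continuous_eval_const _).comp continuous_subtype_val)
    (AlgHom.eqOn_adjoin_iff.2 (Set.eqOn_singleton.2 rfl))
  exact congrFun heq f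

theorem exists_mul_add_mul_eq_one (F G : diskAlgebra)
    (h : ∀ z : 𝔻, (F : C(𝔻, ℂ)) z ≠ 0 ∨ (G : C(𝔻, ℂ)) z ≠ 0) :
    ∃ X Y : diskAlgebra, X * F + Y * G = 1 := by
  by_contra hXY
  have hspan : Ideal.span {F, G} ≠ ⊤ := fun htop =>
    hXY (Ideal.mem_span_pair.1 (htop ▸ Submodule.mem_top))
  obtain ⟨m, hm, hle⟩ := Ideal.exists_le_maximal _ hspan
  have hF := m.toCharacterSpace_apply_eq_zero_of_mem
    (hle (Ideal.subset_span (Set.mem_insert F _)))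
  have hG := m.toCharacterSpace_apply_eq_zero_of_mem
    (hle (Ideal.subset_span (Set.mem_insert_of_mem F rfl)))
  rw [character_apply] at hF hG
  exact (h _).elim (· hF) (· hG)

end diskAlgebra

def MemHInfty (f : ℂ → ℂ) : Prop :=
  DifferentiableOn ℂ f {s : ℂ | 0 < s.re} ∧ ∃ C : ℝ, ∀ s : ℂ, 0 < s.re → ‖f s‖ ≤ C

lemma MemHInfty.neg {f : ℂ → ℂ} (hf : MemHInfty f) : MemHInfty (-f) :=
  ⟨hf.1.neg, hf.2.imp fun _ hC s hs => by simpa using hC s hs⟩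

lemma diskAlgebra.memHInfty_comp_cayleyInv (f : diskAlgebra) :
    MemHInfty (fun s => extendByZero f (cayleyInv s)) :=
  ⟨(diskAlgebra.differentiableOn_extendByZero f).comp differentiableOn_cayleyInv
      fun _ hs => cayleyInv_mem_ball hs,
    ‖(f : C(𝔻, ℂ))‖, fun s hs => by
      dsimp only
      rw [extendByZero_apply_of_mem_ball _ (cayleyInv_mem_ball hs)]
      exact ContinuousMap.norm_coe_le_norm _ _⟩

theorem exists_memHInfty_mul_add_mul_eq_one {F G : ℂ → ℂ} {Finf Ginf : ℂ}
    (hFc : ContinuousOn F {s : ℂ | 0 ≤ s.re}) (hGc : ContinuousOn G {s : ℂ | 0 ≤ s.re})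
    (hFd : DifferentiableOn ℂ F {s : ℂ | 0 < s.re}) (hGd : DifferentiableOn ℂ G {s : ℂ | 0 < s.re})
    (hFlim : Tendsto F (comap (fun z : ℂ => ‖z‖) atTop ⊓ 𝓟 {s : ℂ | 0 ≤ s.re}) (𝓝 Finf))
    (hGlim : Tendsto G (comap (fun z : ℂ => ‖z‖) atTop ⊓ 𝓟 {s : ℂ | 0 ≤ s.re}) (𝓝 Ginf))
    (hinf : Finf ≠ 0 ∨ Ginf ≠ 0) (hzero : ∀ s : ℂ, 0 ≤ s.re → F s ≠ 0 ∨ G s ≠ 0) :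
    ∃ X Y : ℂ → ℂ, MemHInfty X ∧ MemHInfty Y ∧ ∀ s : ℂ, 0 < s.re → X s * F s + Y s * G s = 1 := by
  let Fdisk := diskAlgebra.mk _ (continuousOn_cayleyPullback hFc hFlim)
    (differentiableOn_cayleyPullback Finf hFd)
  let Gdisk := diskAlgebra.mk _ (continuousOn_cayleyPullback hGc hGlim)
    (differentiableOn_cayleyPullback Ginf hGd)
  obtain ⟨X, Y, hXY⟩ := diskAlgebra.exists_mul_add_mul_eq_one Fdisk Gdisk fun z => by
    by_cases hz : (z : ℂ) = 1
    · simpa [Fdisk, Gdisk, diskAlgebra.mk, cayleyPullback, hz] using hinf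
    · simpa [Fdisk, Gdisk, diskAlgebra.mk, cayleyPullback, hz] using hzero _ (re_cayley_nonneg z.2)
  refine ⟨_, _, diskAlgebra.memHInfty_comp_cayleyInv X,
    diskAlgebra.memHInfty_comp_cayleyInv Y, fun s hs => ?_⟩
  have hs1 := add_one_ne_zero_of_re_nonneg hs.le
  have := congr(($hXY : C(𝔻, ℂ)) ⟨cayleyInv s, cayleyInv_mem_closedBall hs.le⟩)
  simpa [Fdisk, Gdisk, diskAlgebra.mk, extendByZero_apply_of_mem_ball _ (cayleyInv_mem_ball hs),
    cayleyPullback_cayleyInv _ _ hs1] using this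

lemma tendsto_ofReal_atTop_inf_re_nonneg : Tendsto (fun r : ℝ => (r : ℂ)) atTop
    (comap (fun z : ℂ => ‖z‖) atTop ⊓ 𝓟 {s : ℂ | 0 ≤ s.re}) :=
  tendsto_inf.2 ⟨tendsto_comap_iff.2 (by simpa [Function.comp_def] using tendsto_abs_atTop_atTop),
    tendsto_principal.2 (by filter_upwards [eventually_ge_atTop 0] with r hr using by simpa)⟩

lemma le_norm_of_tendsto_of_le_norm {H : ℂ → ℂ} {Hinf : ℂ}
    (hlim : Tendsto H (comap (fun z : ℂ => ‖z‖) atTop ⊓ 𝓟 {s : ℂ | 0 ≤ s.re}) (𝓝 Hinf))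
    {ω δ : ℝ} (hH : ∀ s : ℂ, ω < s.re → δ ≤ ‖H s‖) : δ ≤ ‖Hinf‖ := by
  refine ge_of_tendsto (hlim.comp tendsto_ofReal_atTop_inf_re_nonneg).norm ?_
  filter_upwards [eventually_gt_atTop ω] with r hr
  exact hH _ (by simpa using hr)

end

theorem stmt10_general
    (N M : ℂ → ℂ)
    (hN : DifferentiableOn ℂ N {s : ℂ | 0 < s.re})
    (hM : DifferentiableOn ℂ M {s : ℂ | 0 < s.re})
    (ω δ : ℝ) (hδ : 0 < δ) (hMinv : ∀ s : ℂ, ω < s.re → δ ≤ ‖M s‖)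
    (N' M' : ℂ → ℂ)
    (hN'c : ContinuousOn N' {s : ℂ | 0 ≤ s.re})
    (hM'c : ContinuousOn M' {s : ℂ | 0 ≤ s.re})
    (hN'eq : ∀ s : ℂ, 0 < s.re → N' s = N s)
    (hM'eq : ∀ s : ℂ, 0 < s.re → M' s = M s)
    (Ninf Minf : ℂ)
    (hNinf : Tendsto N' (comap (fun z : ℂ => ‖z‖) atTop ⊓ 𝓟 {s : ℂ | 0 ≤ s.re}) (𝓝 Ninf))
    (hMinf : Tendsto M' (comap (fun z : ℂ => ‖z‖) atTop ⊓ 𝓟 {s : ℂ | 0 ≤ s.re}) (𝓝 Minf))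
    (c : ℝ) (hc : 0 < c)
    (hiR : ∀ t : ℝ, c ≤ ‖N' ((t : ℂ) * Complex.I)‖ ^ 2
      + ‖M' ((t : ℂ) * Complex.I)‖ ^ 2)
    (hnz : ∀ s : ℂ, 0 < s.re → 0 < ‖N s‖ + ‖M s‖) :
    (∃ ε : ℝ, 0 < ε ∧ ∀ s : ℂ, 0 ≤ s.re →
      ε ≤ ‖N' s‖ ^ 2 + ‖M' s‖ ^ 2) ∧
    ∃ Xt Yt : ℂ → ℂ,
      DifferentiableOn ℂ Xt {s : ℂ | 0 < s.re} ∧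
      (∃ C : ℝ, ∀ s : ℂ, 0 < s.re → ‖Xt s‖ ≤ C) ∧
      DifferentiableOn ℂ Yt {s : ℂ | 0 < s.re} ∧
      (∃ C : ℝ, ∀ s : ℂ, 0 < s.re → ‖Yt s‖ ≤ C) ∧
      ∀ s : ℂ, 0 < s.re → Xt s * M s - Yt s * N s = 1 := by
  have hMinf_ne : Minf ≠ 0 := norm_pos_iff.1 <| hδ.trans_le <|
    le_norm_of_tendsto_of_le_norm hMinf (ω := max ω 0) fun s hs => by
      rw [hM'eq s ((le_max_right ω 0).trans_lt hs)]
      exact hMinv s ((le_max_left ω 0).trans_lt hs)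
  have hpos : ∀ s : ℂ, 0 ≤ s.re → 0 < ‖N' s‖ ^ 2 + ‖M' s‖ ^ 2 := by
    intro s hs
    rcases hs.eq_or_lt with hs | hs
    · obtain ⟨t, rfl⟩ : ∃ t : ℝ, s = t * Complex.I :=
        ⟨s.im, Complex.ext (by simp [← hs]) (by simp)⟩
      exact hc.trans_le (hiR t)
    · have := hnz s hs
      rw [hN'eq s hs, hM'eq s hs]
      nlinarith [mul_pos this this, sq_nonneg (‖N s‖ - ‖M s‖)]
  refine ⟨exists_pos_le_of_re_nonneg ((hN'c.norm.pow 2).add (hM'c.norm.pow 2))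
    ((hNinf.norm.pow 2).add (hMinf.norm.pow 2))
    (add_pos_of_nonneg_of_pos (by positivity) (pow_pos (norm_pos_iff.2 hMinf_ne) 2)) hpos, ?_⟩
  obtain ⟨X, Y, hX, hY, hXY⟩ := exists_memHInfty_mul_add_mul_eq_one hM'c hN'c
    (hM.congr hM'eq) (hN.congr hN'eq) hMinf hNinf (Or.inl hMinf_ne) fun s hs => by
      by_contra! h
      simpa [h.1, h.2] using hpos s hs
  refine ⟨X, -Y, hX.1, hX.2, hY.neg.1, hY.neg.2, fun s hs => ?_⟩
  simpa [hN'eq s hs, hM'eq s hs, sub_eq_add_neg] using hXY s hs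

/-- proof of Lemma 5.12, scalar case: quasi-right coprime bounded
holomorphic scalar `N̂, M̂` with `M̂⁻¹` bounded on some right half-plane, extending
continuously to the closed right half-plane including `∞`, with
`inf_{iℝ}(|N̂|² + |M̂|²) > 0` and no common zeros in `ℂ⁺`, satisfy
`inf_{cl ℂ⁺}(|N̂|² + |M̂|²) > 0`; hence (Corona theorem) they are right coprime:
`X̃M̂ − ỸN̂ = 1` for some `X̃, Ỹ ∈ H^∞`. -/
theorem stmt10
    (N M : ℂ → ℂ)
    (hN : DifferentiableOn ℂ N {s : ℂ | 0 < s.re})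
    (hM : DifferentiableOn ℂ M {s : ℂ | 0 < s.re})
    (CN CM : ℝ)
    (hNb : ∀ s : ℂ, 0 < s.re → ‖N s‖ ≤ CN)
    (hMb : ∀ s : ℂ, 0 < s.re → ‖M s‖ ≤ CM)
    (hqrc : ∀ f : ℂ → ℂ, DifferentiableOn ℂ f {s : ℂ | 0 < s.re} →
      MemH2 (fun s => N s * f s) → MemH2 (fun s => M s * f s) → MemH2 f)
    (ω δ : ℝ) (hδ : 0 < δ) (hMinv : ∀ s : ℂ, ω < s.re → δ ≤ ‖M s‖)
    (N' M' : ℂ → ℂ)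
    (hN'c : ContinuousOn N' {s : ℂ | 0 ≤ s.re})
    (hM'c : ContinuousOn M' {s : ℂ | 0 ≤ s.re})
    (hN'eq : ∀ s : ℂ, 0 < s.re → N' s = N s)
    (hM'eq : ∀ s : ℂ, 0 < s.re → M' s = M s)
    (Ninf Minf : ℂ)
    (hNinf : Tendsto N' (comap (fun z : ℂ => ‖z‖) atTop ⊓ 𝓟 {s : ℂ | 0 ≤ s.re}) (𝓝 Ninf))
    (hMinf : Tendsto M' (comap (fun z : ℂ => ‖z‖) atTop ⊓ 𝓟 {s : ℂ | 0 ≤ s.re}) (𝓝 Minf))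
    (c : ℝ) (hc : 0 < c)
    (hiR : ∀ t : ℝ, c ≤ ‖N' ((t : ℂ) * Complex.I)‖ ^ 2
      + ‖M' ((t : ℂ) * Complex.I)‖ ^ 2)
    (hnz : ∀ s : ℂ, 0 < s.re → 0 < ‖N s‖ + ‖M s‖) :
    (∃ ε : ℝ, 0 < ε ∧ ∀ s : ℂ, 0 ≤ s.re →
      ε ≤ ‖N' s‖ ^ 2 + ‖M' s‖ ^ 2) ∧
    ∃ Xt Yt : ℂ → ℂ,
      DifferentiableOn ℂ Xt {s : ℂ | 0 < s.re} ∧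
      (∃ C : ℝ, ∀ s : ℂ, 0 < s.re → ‖Xt s‖ ≤ C) ∧
      DifferentiableOn ℂ Yt {s : ℂ | 0 < s.re} ∧
      (∃ C : ℝ, ∀ s : ℂ, 0 < s.re → ‖Yt s‖ ≤ C) ∧
      ∀ s : ℂ, 0 < s.re → Xt s * M s - Yt s * N s = 1 :=
  stmt10_general N M hN hM ω δ hδ hMinv N' M' hN'c hM'c hN'eq hM'eq Ninf Minf hNinf hMinf c hc hiR
    hnz
end

section
/- Let 𝒜 be a strongly continuous semigroup on a Hilbert space H satisfying ‖𝒜^t x₀‖ ∈ L²([0,∞)) for every x₀ ∈ H (i.e., 𝒜x₀ ∈ L²([0,∞); H) for all x₀). Then 𝒜 is exponentially stable: there exist M ≥ 1 and ε > 0 such that ‖𝒜^t‖ ≤ M e^{-εt} for all t ≥ 0. -/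
/-!
By the closed graph theorem the orbit map `x ↦ (t ↦ 𝒜 t x)` into `L²(0, ∞)` is bounded, so
`∫₀^∞ ‖𝒜 s x‖² ≤ (C ‖x‖)²`, and Banach–Steinhaus gives `‖𝒜 t‖ ≤ K` on `[0, 1]`.
Averaging `‖𝒜 t x‖ ≤ ‖𝒜 (t - s)‖ ‖𝒜 s x‖` over `s ∈ [t - 1, t]` bounds `‖𝒜 t‖` uniformly by
some `L`; averaging over `s ∈ [0, t]` then gives `t ‖𝒜 t x‖² ≤ (L C ‖x‖)²`, so `‖𝒜 τ‖ ≤ 1/2`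
for some `τ > 0`, and the semigroup law turns this into decay like `2^(-t/τ)`.
-/

open MeasureTheory Filter Topology Set
open scoped ENNReal

section General

variable {𝕜 E F : Type*} [NontriviallyNormedField 𝕜]
  [NormedAddCommGroup E] [NormedSpace 𝕜 E] [NormedAddCommGroup F] [NormedSpace 𝕜 F]

theorem IsCompact.exists_forall_opNorm_le [CompleteSpace E] {X : Type*} [TopologicalSpace X]
    {s : Set X} (hs : IsCompact s) {T : X → E →L[𝕜] F}
    (hT : ∀ x, ContinuousOn (fun t => T t x) s) : ∃ K, ∀ t ∈ s, ‖T t‖ ≤ K := by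
  have hpt : ∀ x, ∃ C, ∀ t : s, ‖T t x‖ ≤ C := fun x => by
    obtain ⟨C, hC⟩ := hs.exists_bound_of_continuousOn (hT x)
    exact ⟨C, fun t => hC t t.2⟩
  obtain ⟨K, hK⟩ := banach_steinhaus hpt
  exact ⟨K, fun t ht => hK ⟨t, ht⟩⟩

section Lp

variable {α : Type*} [MeasurableSpace α] {μ : Measure α} {p : ℝ≥0∞}

def lpApplyLinearMap (T : α → E →L[𝕜] F) (hT : ∀ x, MemLp (fun a => T a x) p μ) :
    E →ₗ[𝕜] Lp F p μ where
  toFun x := (hT x).toLp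
  map_add' x y := by
    rw [← MemLp.toLp_add]
    exact MemLp.toLp_congr _ _ (.of_forall fun a => map_add (T a) x y)
  map_smul' c x := by
    rw [RingHom.id_apply, ← MemLp.toLp_const_smul]
    exact MemLp.toLp_congr _ _ (.of_forall fun a => map_smul (T a) c x)

theorem coeFn_lpApplyLinearMap (T : α → E →L[𝕜] F) (hT : ∀ x, MemLp (fun a => T a x) p μ)
    (x : E) : lpApplyLinearMap T hT x =ᵐ[μ] fun a => T a x :=
  (hT x).coeFn_toLp

theorem exists_lpNorm_apply_le [Fact (1 ≤ p)] [CompleteSpace E] [CompleteSpace F]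
    (T : α → E →L[𝕜] F) (hT : ∀ x, MemLp (fun a => T a x) p μ) :
    ∃ C, 0 ≤ C ∧ ∀ x, lpNorm (fun a => T a x) p μ ≤ C * ‖x‖ := by
  set g := lpApplyLinearMap T hT
  have hgraph : ∀ (u : ℕ → E) (x y), Tendsto u atTop (𝓝 x) → Tendsto (g ∘ u) atTop (𝓝 y) →
      y = g x := by
    intro u x y hux huy
    -- `Lᵖ` convergence gives a.e. convergence along a subsequence
    obtain ⟨ns, hns, hy⟩ := (tendstoInMeasure_of_tendsto_Lp huy).exists_seq_tendsto_ae
    have hu : ∀ᵐ a ∂μ, ∀ n, g (u n) a = T a (u n) :=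
      ae_all_iff.2 fun n => coeFn_lpApplyLinearMap T hT (u n)
    refine Lp.ext ?_
    filter_upwards [hy, hu, coeFn_lpApplyLinearMap T hT x] with a hya hua hxa
    rw [hxa]
    refine tendsto_nhds_unique hya ?_
    simp only [Function.comp_apply, hua]
    exact ((T a).continuous.tendsto x).comp (hux.comp hns.tendsto_atTop)
  refine ⟨_, norm_nonneg (ContinuousLinearMap.ofSeqClosedGraph hgraph), fun x => ?_⟩
  rw [← toReal_eLpNorm (hT x).1, ← Lp.norm_toLp _ (hT x)]
  exact (ContinuousLinearMap.ofSeqClosedGraph hgraph).le_opNorm x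

theorem exists_integral_norm_sq_le [CompleteSpace E] [CompleteSpace F]
    (T : α → E →L[𝕜] F) (hT : ∀ x, MemLp (fun a => T a x) 2 μ) :
    ∃ C, 0 ≤ C ∧ ∀ x, ∫ a, ‖T a x‖ ^ 2 ∂μ ≤ (C * ‖x‖) ^ 2 := by
  obtain ⟨C, hC0, hC⟩ := exists_lpNorm_apply_le T hT
  refine ⟨C, hC0, fun x => ?_⟩
  have hsq : lpNorm (fun a => T a x) 2 μ ^ 2 = ∫ a, ‖T a x‖ ^ 2 ∂μ := by
    rw [lpNorm_eq_integral_norm_rpow_toReal two_ne_zero ENNReal.ofNat_ne_top (hT x).1]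
    simpa using Real.rpow_inv_natCast_pow (n := 2)
      (integral_nonneg fun a => by positivity) two_ne_zero
  rw [← hsq]
  exact pow_le_pow_left₀ lpNorm_nonneg (hC x) 2

end Lp

theorem half_pow_floor_div_le (t τ : ℝ) :
    (1 / 2 : ℝ) ^ ⌊t / τ⌋₊ ≤ 2 * Real.exp (-(Real.log 2 / τ) * t) := by
  have hlog : 0 < Real.log 2 := Real.log_pos one_lt_two
  have hfloor : t / τ < ⌊t / τ⌋₊ + 1 := Nat.lt_floor_add_one _
  have hexp : -(⌊t / τ⌋₊ * Real.log 2) ≤ Real.log 2 + -(Real.log 2 / τ) * t := by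
    have : Real.log 2 / τ * t = Real.log 2 * (t / τ) := by ring
    nlinarith
  calc (1 / 2 : ℝ) ^ ⌊t / τ⌋₊ = Real.exp (-(⌊t / τ⌋₊ * Real.log 2)) := by
        rw [Real.exp_neg, Real.exp_nat_mul, Real.exp_log two_pos, one_div, inv_pow]
    _ ≤ Real.exp (Real.log 2 + -(Real.log 2 / τ) * t) := Real.exp_le_exp.2 hexp
    _ = 2 * Real.exp (-(Real.log 2 / τ) * t) := by rw [Real.exp_add, Real.exp_log two_pos]

section Semigroup

variable {T : ℝ → E →L[𝕜] E}

theorem norm_apply_le_of_semigroup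
    (hsg : ∀ s t : ℝ, 0 ≤ s → 0 ≤ t → T (s + t) = (T s).comp (T t))
    {s t : ℝ} (hs : 0 ≤ s) (hst : s ≤ t) (x : E) : ‖T t x‖ ≤ ‖T (t - s)‖ * ‖T s x‖ := by
  have h := hsg (t - s) s (sub_nonneg.2 hst) hs
  rw [sub_add_cancel] at h
  rw [h, ContinuousLinearMap.comp_apply]
  exact (T (t - s)).le_opNorm _

theorem mul_norm_sq_le_integral
    (hsg : ∀ s t : ℝ, 0 ≤ s → 0 ≤ t → T (s + t) = (T s).comp (T t))
    {x : E} (hx : MemLp (fun t => T t x) 2 (volume.restrict (Ioi 0)))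
    {a t B : ℝ} (ha : 0 ≤ a) (hat : a ≤ t) (hB : ∀ s ∈ Ioc a t, ‖T (t - s)‖ ≤ B) :
    (t - a) * ‖T t x‖ ^ 2 ≤ B ^ 2 * ∫ s in Ioi 0, ‖T s x‖ ^ 2 := by
  have hint : IntegrableOn (fun s => ‖T s x‖ ^ 2) (Ioi 0) :=
    (memLp_two_iff_integrable_sq_norm hx.1).1 hx
  have hsub : Ioc a t ⊆ Ioi 0 := fun s hs => ha.trans_lt hs.1
  calc (t - a) * ‖T t x‖ ^ 2 = ∫ _ in Ioc a t, ‖T t x‖ ^ 2 := by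
        rw [setIntegral_const, Real.volume_real_Ioc_of_le hat, smul_eq_mul]
    _ ≤ ∫ s in Ioc a t, B ^ 2 * ‖T s x‖ ^ 2 := by
        refine setIntegral_mono_on (integrableOn_const measure_Ioc_lt_top.ne)
          ((hint.mono_set hsub).const_mul _) measurableSet_Ioc fun s hs => ?_
        rw [← mul_pow]
        refine pow_le_pow_left₀ (norm_nonneg _) ?_ 2
        calc ‖T t x‖ ≤ ‖T (t - s)‖ * ‖T s x‖ :=
              norm_apply_le_of_semigroup hsg (ha.trans hs.1.le) hs.2 x
          _ ≤ B * ‖T s x‖ := mul_le_mul_of_nonneg_right (hB s hs) (norm_nonneg _)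
    _ = B ^ 2 * ∫ s in Ioc a t, ‖T s x‖ ^ 2 := integral_const_mul _ _
    _ ≤ B ^ 2 * ∫ s in Ioi 0, ‖T s x‖ ^ 2 :=
        mul_le_mul_of_nonneg_left (setIntegral_mono_set hint
          (.of_forall fun s => sq_nonneg _) hsub.eventuallyLE) (sq_nonneg B)

theorem norm_le_max_of_integral_sq_le
    (hsg : ∀ s t : ℝ, 0 ≤ s → 0 ≤ t → T (s + t) = (T s).comp (T t))
    (hL2 : ∀ x, MemLp (fun t => T t x) 2 (volume.restrict (Ioi 0)))
    {K C : ℝ} (hK : ∀ t ∈ Icc (0 : ℝ) 1, ‖T t‖ ≤ K) (hC0 : 0 ≤ C)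
    (hC : ∀ x, ∫ s in Ioi 0, ‖T s x‖ ^ 2 ≤ (C * ‖x‖) ^ 2) {t : ℝ} (ht : 0 ≤ t) :
    ‖T t‖ ≤ max K (K * C) := by
  rcases le_or_gt t 1 with ht1 | ht1
  · exact (hK t ⟨ht, ht1⟩).trans (le_max_left _ _)
  have hK0 : 0 ≤ K := (norm_nonneg _).trans (hK 0 ⟨le_rfl, zero_le_one⟩)
  refine ContinuousLinearMap.opNorm_le_bound _ (hK0.trans (le_max_left _ _)) fun x => ?_
  have hsq : ‖T t x‖ ^ 2 ≤ (K * C * ‖x‖) ^ 2 :=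
    calc ‖T t x‖ ^ 2 = (t - (t - 1)) * ‖T t x‖ ^ 2 := by ring
      _ ≤ K ^ 2 * ∫ s in Ioi 0, ‖T s x‖ ^ 2 :=
          mul_norm_sq_le_integral hsg (hL2 x) (by linarith) (by linarith)
            fun s hs => hK _ ⟨by linarith [hs.2], by linarith [hs.1]⟩
      _ ≤ K ^ 2 * (C * ‖x‖) ^ 2 := mul_le_mul_of_nonneg_left (hC x) (sq_nonneg K)
      _ = (K * C * ‖x‖) ^ 2 := by ring
  calc ‖T t x‖ ≤ K * C * ‖x‖ :=
        (pow_le_pow_iff_left₀ (norm_nonneg _) (by positivity) two_ne_zero).1 hsq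
    _ ≤ max K (K * C) * ‖x‖ := mul_le_mul_of_nonneg_right (le_max_right _ _) (norm_nonneg _)

theorem exists_pos_norm_le_half
    (hsg : ∀ s t : ℝ, 0 ≤ s → 0 ≤ t → T (s + t) = (T s).comp (T t))
    (hL2 : ∀ x, MemLp (fun t => T t x) 2 (volume.restrict (Ioi 0)))
    {L C : ℝ} (hL : ∀ t, 0 ≤ t → ‖T t‖ ≤ L)
    (hC : ∀ x, ∫ s in Ioi 0, ‖T s x‖ ^ 2 ≤ (C * ‖x‖) ^ 2) :
    ∃ τ, 0 < τ ∧ ‖T τ‖ ≤ 1 / 2 := by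
  set τ := 4 * (L * C) ^ 2 + 1
  have hτ : 0 < τ := by positivity
  refine ⟨τ, hτ, ContinuousLinearMap.opNorm_le_bound _ (by norm_num) fun x => ?_⟩
  have hsq : τ * ‖T τ x‖ ^ 2 ≤ τ * (1 / 2 * ‖x‖) ^ 2 :=
    calc τ * ‖T τ x‖ ^ 2 = (τ - 0) * ‖T τ x‖ ^ 2 := by rw [sub_zero]
      _ ≤ L ^ 2 * ∫ s in Ioi 0, ‖T s x‖ ^ 2 :=
          mul_norm_sq_le_integral hsg (hL2 x) le_rfl hτ.le
            fun s hs => hL _ (sub_nonneg.2 hs.2)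
      _ ≤ L ^ 2 * (C * ‖x‖) ^ 2 := mul_le_mul_of_nonneg_left (hC x) (sq_nonneg L)
      _ = (L * C) ^ 2 * ‖x‖ ^ 2 := by ring
      _ ≤ τ / 4 * ‖x‖ ^ 2 := mul_le_mul_of_nonneg_right (by linarith) (sq_nonneg _)
      _ = τ * (1 / 2 * ‖x‖) ^ 2 := by ring
  exact (pow_le_pow_iff_left₀ (norm_nonneg _) (by positivity) two_ne_zero).1
    (le_of_mul_le_mul_left hsq hτ)

theorem norm_le_mul_pow_of_nat_mul_le
    (hsg : ∀ s t : ℝ, 0 ≤ s → 0 ≤ t → T (s + t) = (T s).comp (T t))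
    {L q τ : ℝ} (hL : ∀ t, 0 ≤ t → ‖T t‖ ≤ L) (hτ : 0 ≤ τ) (hq : ‖T τ‖ ≤ q) :
    ∀ (n : ℕ) {t : ℝ}, n * τ ≤ t → ‖T t‖ ≤ L * q ^ n
  | 0, t, ht => by simpa using hL t (by simpa using ht)
  | n + 1, t, ht => by
    have hn : n * τ ≤ t - τ := by push_cast at ht; linarith
    have h := hsg τ (t - τ) hτ ((mul_nonneg n.cast_nonneg hτ).trans hn)
    rw [add_sub_cancel] at h
    calc ‖T t‖ ≤ ‖T τ‖ * ‖T (t - τ)‖ := h ▸ ContinuousLinearMap.opNorm_comp_le _ _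
      _ ≤ q * (L * q ^ n) :=
          mul_le_mul hq (norm_le_mul_pow_of_nat_mul_le hsg hL hτ hq n hn) (norm_nonneg _)
            ((norm_nonneg _).trans hq)
      _ = L * q ^ (n + 1) := by ring

theorem exists_exp_decay_of_norm_le_half
    (hsg : ∀ s t : ℝ, 0 ≤ s → 0 ≤ t → T (s + t) = (T s).comp (T t))
    {L τ : ℝ} (hL : ∀ t, 0 ≤ t → ‖T t‖ ≤ L) (hτ : 0 < τ) (hhalf : ‖T τ‖ ≤ 1 / 2) :
    ∃ M ε : ℝ, 1 ≤ M ∧ 0 < ε ∧ ∀ t : ℝ, 0 ≤ t → ‖T t‖ ≤ M * Real.exp (-ε * t) := by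
  have hL0 : 0 ≤ L := (norm_nonneg _).trans (hL 0 le_rfl)
  refine ⟨max 1 (2 * L), Real.log 2 / τ, le_max_left _ _,
    div_pos (Real.log_pos one_lt_two) hτ, fun t ht => ?_⟩
  have hn : (⌊t / τ⌋₊ : ℝ) * τ ≤ t := (le_div_iff₀ hτ).1 (Nat.floor_le (div_nonneg ht hτ.le))
  calc ‖T t‖ ≤ L * (1 / 2) ^ ⌊t / τ⌋₊ := norm_le_mul_pow_of_nat_mul_le hsg hL hτ.le hhalf _ hn
    _ ≤ L * (2 * Real.exp (-(Real.log 2 / τ) * t)) :=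
        mul_le_mul_of_nonneg_left (half_pow_floor_div_le t τ) hL0
    _ ≤ max 1 (2 * L) * Real.exp (-(Real.log 2 / τ) * t) := by
        rw [← mul_assoc, mul_comm L]
        exact mul_le_mul_of_nonneg_right (le_max_right _ _) (Real.exp_nonneg _)

end Semigroup

end General

theorem stmt12_general {H : Type*} [NormedAddCommGroup H] [InnerProductSpace ℂ H] [CompleteSpace H]
    (𝒜 : ℝ → H →L[ℂ] H)
    (hsg : ∀ s t : ℝ, 0 ≤ s → 0 ≤ t → 𝒜 (s + t) = (𝒜 s).comp (𝒜 t))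
    (hcont : ∀ x : H, ContinuousOn (fun t => 𝒜 t x) (Set.Ici (0:ℝ)))
    (hL2 : ∀ x : H, MemLp (fun t => 𝒜 t x) 2 (volume.restrict (Set.Ioi (0:ℝ)))) :
    ∃ M ε : ℝ, 1 ≤ M ∧ 0 < ε ∧ ∀ t : ℝ, 0 ≤ t → ‖𝒜 t‖ ≤ M * Real.exp (-ε * t) := by
  obtain ⟨K, hK⟩ := isCompact_Icc.exists_forall_opNorm_le fun x =>
    (hcont x).mono Icc_subset_Ici_self
  obtain ⟨C, hC0, hC⟩ := exists_integral_norm_sq_le 𝒜 hL2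
  have hbdd : ∀ t, 0 ≤ t → ‖𝒜 t‖ ≤ max K (K * C) := fun t ht =>
    norm_le_max_of_integral_sq_le hsg hL2 hK hC0 hC ht
  obtain ⟨τ, hτ, hhalf⟩ := exists_pos_norm_le_half hsg hL2 hbdd hC
  exact exists_exp_decay_of_norm_le_half hsg hbdd hτ hhalf

/-- Datko's theorem, Lemma 2.2: a strongly continuous semigroup on a
Hilbert space all of whose orbits are in `L²([0,∞); H)` is exponentially stable. -/
theorem stmt12 {H : Type*} [NormedAddCommGroup H] [InnerProductSpace ℂ H] [CompleteSpace H]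
    (𝒜 : ℝ → H →L[ℂ] H)
    (h0 : 𝒜 0 = ContinuousLinearMap.id ℂ H)
    (hsg : ∀ s t : ℝ, 0 ≤ s → 0 ≤ t → 𝒜 (s + t) = (𝒜 s).comp (𝒜 t))
    (hcont : ∀ x : H, ContinuousOn (fun t => 𝒜 t x) (Set.Ici (0:ℝ)))
    (hL2 : ∀ x : H, MemLp (fun t => 𝒜 t x) 2 (volume.restrict (Set.Ioi (0:ℝ)))) :
    ∃ M ε : ℝ, 1 ≤ M ∧ 0 < ε ∧ ∀ t : ℝ, 0 ≤ t → ‖𝒜 t‖ ≤ M * Real.exp (-ε * t) :=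
  stmt12_general 𝒜 hsg hcont hL2
end

section
/- Let H be a Hilbert space and let (P, K_t) and (P̃, K̃_t) be two families solving the following discrete-time-like stationarity relations with respect to operator families 𝒜_○^t, 𝒜̃_○^t ∈ B(H) and output families: P = (𝒜̃_○^t)* P 𝒜_○^t + Q_t and P̃* = (𝒜_○^t)* P̃* 𝒜̃_○^t + Q_t* for all t ≥ 0 with the same cross term Q_t ∈ B(H). If 𝒜_○^t x → 0 and 𝒜̃_○^t x → 0 strongly as t → ∞ for every x ∈ H, then P = P̃*. In particular, a strongly internally stabilizing self-adjoint solution of such a Riccati-type stationarity system is unique. -/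
open Filter Topology
open scoped InnerProductSpace

namespace ContinuousLinearMap

variable {𝕜 E F ι : Type*} [RCLike 𝕜]
  [NormedAddCommGroup E] [InnerProductSpace 𝕜 E]
  [NormedAddCommGroup F] [InnerProductSpace 𝕜 F] [CompleteSpace F]

/-- Testing against `D x` gives `‖D x‖² = ⟪B (D x), D (A x)⟫ → 0`. -/
theorem eq_zero_of_eventually_eq_adjoint_comp_comp {l : Filter ι} [l.NeBot] (D : E →L[𝕜] F)
    {A : ι → E →L[𝕜] E} {B : ι → F →L[𝕜] F}
    (hD : ∀ᶠ i in l, D = adjoint (B i) ∘L D ∘L A i)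
    (hA : ∀ x, Tendsto (fun i => A i x) l (𝓝 0)) (hB : ∀ y, Tendsto (fun i => B i y) l (𝓝 0)) :
    D = 0 := by
  ext x
  have h_lim : Tendsto (fun i => ⟪B i (D x), D (A i x)⟫_𝕜) l (𝓝 0) := by
    have hDA : Tendsto (fun i => D (A i x)) l (𝓝 0) := by
      simpa [Function.comp_def] using (D.continuous.tendsto 0).comp (hA x)
    simpa using (hB (D x)).inner (𝕜 := 𝕜) hDA
  have h_eq : ∀ᶠ i in l, ⟪B i (D x), D (A i x)⟫_𝕜 = ⟪D x, D x⟫_𝕜 := by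
    filter_upwards [hD] with i hi
    rw [← adjoint_inner_right]
    exact congrArg (⟪D x, ·⟫_𝕜) (DFunLike.congr_fun hi x).symm
  have h_self : ⟪D x, D x⟫_𝕜 = 0 :=
    tendsto_nhds_unique tendsto_const_nhds (h_lim.congr' h_eq)
  simpa using h_self

end ContinuousLinearMap

open ContinuousLinearMap in
/-- proof of Theorem 7.6: if `P` and `P̃*` satisfy the same Riccati-type
stationarity relation `P = (𝒜̃ᵗ)* P 𝒜ᵗ + Qₜ` with the same cross term `Qₜ`, and both
closed-loop families `𝒜ᵗ, 𝒜̃ᵗ` converge strongly to `0`, then `P = P̃*`; in particular a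
strongly internally stabilizing solution of such a system is unique. -/
theorem stmt19 {H : Type*} [NormedAddCommGroup H] [InnerProductSpace ℂ H] [CompleteSpace H]
    (A At : ℝ → H →L[ℂ] H) (Q : ℝ → H →L[ℂ] H) (P Pt : H →L[ℂ] H)
    (h1 : ∀ t : ℝ, 0 ≤ t →
      P = ((ContinuousLinearMap.adjoint (At t)).comp (P.comp (A t))) + Q t)
    (h2 : ∀ t : ℝ, 0 ≤ t →
      ContinuousLinearMap.adjoint Pt
        = ((ContinuousLinearMap.adjoint (At t)).comp
            ((ContinuousLinearMap.adjoint Pt).comp (A t))) + Q t)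
    (hA : ∀ x : H, Tendsto (fun t => A t x) atTop (𝓝 0))
    (hAt : ∀ x : H, Tendsto (fun t => At t x) atTop (𝓝 0)) :
    P = ContinuousLinearMap.adjoint Pt := by
  have h_diff : ∀ᶠ t in atTop,
      P - adjoint Pt = adjoint (At t) ∘L (P - adjoint Pt) ∘L A t := by
    filter_upwards [eventually_ge_atTop 0] with t ht
    conv_lhs => rw [h1 t ht, h2 t ht]
    rw [sub_comp, comp_sub, add_sub_add_right_eq_sub]
  exact sub_eq_zero.mp (eq_zero_of_eventually_eq_adjoint_comp_comp _ h_diff hA hAt)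
end
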